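/- arXiv:1512.09035 — 2 statements merged into one kernel-verified Lean document; each statement's English description precedes it below -/
import Mathlib

section
/- Let p be the step distribution of an irreducible random walk on ℤ^d with finite support V. For every δ ∈ M, the function f(δ, x) = ⟨x, δ⟩ − log κ(x) on ℝ^d attains its global maximum at a unique point s ∈ ℝ^d, and this point satisfies ∇ log κ(s) = δ. -/
/- Framework for random walks on the integer lattice ℤ^d. -/

noncomputable section

namespace RWalk

/-- `ℝ^d` with the Euclidean norm. -/
abbrev E (d : ℕ) : Type := EuclideanSpace ℝ (Fin d)

/-- The embedding of `ℤ^d` into `ℝ^d`. -/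
def emb {d : ℕ} (x : Fin d → ℤ) : E d := WithLp.toLp 2 (fun i => (x i : ℝ))

/-- The bilinear pairing `⟨x, y⟩ = ∑ i, x i * y i` on `ℝ^d`. -/
def pairR {d : ℕ} (x y : E d) : ℝ := ∑ i, x i * y i

/-- The ℓ¹-norm on `ℝ^d`. -/
def l1 {d : ℕ} (x : E d) : ℝ := ∑ i, |x i|

/-- The `n`-step transition function of the walk with step distribution `p`:
`tfun p 0 = δ₀`, hence `tfun p 1 = p` and
`tfun p (n+1) x = ∑ y, tfun p n y * p (x - y)`. -/
def tfun {d : ℕ} (p : (Fin d → ℤ) → ℝ) : ℕ → (Fin d → ℤ) → ℝ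
  | 0, x => if x = 0 then 1 else 0
  | n + 1, x => ∑ᶠ y : Fin d → ℤ, tfun p n y * p (x - y)

/-- `κ(x) = ∑_{v ∈ V} p(v) e^{⟨x,v⟩}`. -/
def kappa {d : ℕ} (p : (Fin d → ℤ) → ℝ) (x : E d) : ℝ :=
  ∑ᶠ v : Fin d → ℤ, p v * Real.exp (pairR x (emb v))

/-- `log κ`. -/
def logKappa {d : ℕ} (p : (Fin d → ℤ) → ℝ) : E d → ℝ := fun x => Real.log (kappa p x)

/-- `φ(δ) = sup_{x ∈ ℝ^d} (⟨x,δ⟩ - log κ(x))`. -/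
def phi {d : ℕ} (p : (Fin d → ℤ) → ℝ) (δ : E d) : ℝ :=
  sSup (Set.range fun x : E d => pairR x δ - logKappa p x)

/-- `M`, the interior of the convex hull of the support `V` of `p`. -/
def Mset {d : ℕ} (p : (Fin d → ℤ) → ℝ) : Set (E d) :=
  interior (convexHull ℝ (emb '' Function.support p))

/-- The Hessian matrix of `f` at `x`. -/
def hessMat {d : ℕ} (f : E d → ℝ) (x : E d) : Matrix (Fin d) (Fin d) ℝ :=
  fun i j => fderiv ℝ (fun y => fderiv ℝ f y (EuclideanSpace.single j 1)) x
      (EuclideanSpace.single i 1)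

/-- The quadratic form `u ↦ uᵀ A u` of a matrix `A`. -/
def quadForm {d : ℕ} (A : Matrix (Fin d) (Fin d) ℝ) (u : E d) : ℝ :=
  ∑ i, ∑ j, u i * A i j * u j

/-- The second directional derivative `D_u² f(x)`. -/
def D2 {d : ℕ} (f : E d → ℝ) (x u : E d) : ℝ :=
  iteratedDeriv 2 (fun t : ℝ => f (x + t • u)) 0

/-- Irreducibility: for every `x ∈ ℤ^d` there is `n ∈ ℕ` with `p(n; x) > 0`. -/
def Irred {d : ℕ} (p : (Fin d → ℤ) → ℝ) : Prop :=
  ∀ x : Fin d → ℤ, ∃ n : ℕ, 0 < n ∧ 0 < tfun p n x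

/-- The step distribution of the simple random walk on `ℤ^d`. -/
def srw (d : ℕ) (v : Fin d → ℤ) : ℝ :=
  if (∑ i, (v i).natAbs) = 1 then (2 * (d : ℝ))⁻¹ else 0

open scoped RealInnerProductSpace

/-! `log κ` is the cumulant generating function of the step distribution: its gradient at `x` is
the mean of the exponentially tilted distribution `v ↦ p(v) e^{⟨x,v⟩} / κ(x)`. Since `δ` lies in
the interior of the convex hull of `V`, `⟨x,δ⟩ - log κ(x) ≤ C - ε‖x‖`, so this continuous
function attains its maximum, and at a maximum `s` the first-order condition reads
`∇ log κ(s) = δ`. Strict Jensen for `exp` under the tilted distribution at `s` gives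
`log κ(x) > log κ(s) + ⟨x - s, δ⟩` unless `⟨x - s, ·⟩` is constant on `V`, and irreducibility
rules that out for `x ≠ s`. -/

section LogSumExp

variable {F ι : Type*} [NormedAddCommGroup F] [InnerProductSpace ℝ F]
  (s : Finset ι) (a : ι → ℝ) (z : ι → F)

def expSum (x : F) : ℝ := ∑ i ∈ s, a i * Real.exp ⟪z i, x⟫

def tiltedMean (x : F) : F :=
  (expSum s a z x)⁻¹ • ∑ i ∈ s, (a i * Real.exp ⟪z i, x⟫) • z i

variable {s a z}

lemma expSum_pos (ha : ∀ i ∈ s, 0 < a i) (hs : s.Nonempty) (x : F) : 0 < expSum s a z x :=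
  Finset.sum_pos (fun i hi => mul_pos (ha i hi) (Real.exp_pos _)) hs

lemma continuous_log_expSum (ha : ∀ i ∈ s, 0 < a i) (hs : s.Nonempty) :
    Continuous fun x => Real.log (expSum s a z x) :=
  (continuous_finsetSum _ fun _ _ => by fun_prop).log fun x => (expSum_pos ha hs x).ne'

lemma hasFDerivAt_log_expSum (ha : ∀ i ∈ s, 0 < a i) (hs : s.Nonempty) (x : F) :
    HasFDerivAt (fun y => Real.log (expSum s a z y)) (innerSL ℝ (tiltedMean s a z x)) x := by
  have hsum : HasFDerivAt (expSum s a z)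
      (∑ i ∈ s, (a i * Real.exp ⟪z i, x⟫) • innerSL ℝ (z i)) x :=
    HasFDerivAt.fun_sum fun i _ => by
      simpa only [smul_smul, innerSL_apply_apply] using
        (((innerSL ℝ (z i)).hasFDerivAt (x := x)).exp.const_mul (a i))
  convert hsum.log (expSum_pos ha hs x).ne' using 1
  simp only [tiltedMean, map_smul, map_sum]

lemma hasGradientAt_log_expSum [CompleteSpace F] (ha : ∀ i ∈ s, 0 < a i) (hs : s.Nonempty)
    (x : F) : HasGradientAt (fun y => Real.log (expSum s a z y)) (tiltedMean s a z x) x :=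
  hasGradientAt_iff_hasFDerivAt.2 (hasFDerivAt_log_expSum ha hs x)

lemma tiltedMean_eq_of_forall_inner_sub_log_expSum_le (ha : ∀ i ∈ s, 0 < a i) (hs : s.Nonempty) {δ t : F}
    (ht : ∀ y, ⟪δ, y⟫ - Real.log (expSum s a z y) ≤ ⟪δ, t⟫ - Real.log (expSum s a z t)) :
    tiltedMean s a z t = δ := by
  have hderiv := ((innerSL ℝ δ).hasFDerivAt (x := t)).sub (hasFDerivAt_log_expSum (z := z) ha hs t)
  have hzero := IsLocalMax.hasFDerivAt_eq_zero (Filter.Eventually.of_forall ht) hderiv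
  rw [← map_sub] at hzero
  have := congrArg (fun L => L (δ - tiltedMean s a z t)) hzero
  simp only [innerSL_apply_apply, zero_apply, inner_self_eq_zero, sub_eq_zero] at this
  exact this.symm

/-- Strict Jensen for `exp` under the tilted weights `a i e^{⟪z i, x⟫} / expSum x`. -/
lemma log_expSum_add_inner_tiltedMean_lt (ha : ∀ i ∈ s, 0 < a i) {x y : F}
    (hne : ∃ i ∈ s, ∃ j ∈ s, ⟪z i, y - x⟫ ≠ ⟪z j, y - x⟫) :
    Real.log (expSum s a z x) + ⟪tiltedMean s a z x, y - x⟫ < Real.log (expSum s a z y) := by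
  have hs : s.Nonempty := let ⟨i, hi, _⟩ := hne; ⟨i, hi⟩
  have hx := expSum_pos (z := z) ha hs x
  have hy := expSum_pos (z := z) ha hs y
  set w : ι → ℝ := fun i => a i * Real.exp ⟪z i, x⟫ / expSum s a z x
  have hw1 : ∑ i ∈ s, w i = 1 := by rw [← Finset.sum_div]; exact div_self hx.ne'
  have hwpos : ∀ i ∈ s, 0 < w i := fun i hi => by have := ha i hi; positivity
  have hmean : ∑ i ∈ s, w i • ⟪z i, y - x⟫ = ⟪tiltedMean s a z x, y - x⟫ := by
    simp only [tiltedMean, inner_smul_left, sum_inner, Finset.mul_sum, RCLike.conj_to_real,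
      smul_eq_mul, w]
    exact Finset.sum_congr rfl fun i _ => by ring
  have hexp : ∑ i ∈ s, w i • Real.exp ⟪z i, y - x⟫ = expSum s a z y / expSum s a z x := by
    simp only [expSum, Finset.sum_div, smul_eq_mul, w]
    refine Finset.sum_congr rfl fun i _ => ?_
    rw [div_mul_eq_mul_div, mul_assoc, ← Real.exp_add, ← inner_add_right, add_sub_cancel]
  have hjensen := strictConvexOn_exp.map_sum_lt hwpos hw1 (fun i _ => Set.mem_univ _) hne
  rw [hmean, hexp] at hjensen
  have := Real.log_lt_log (Real.exp_pos _) hjensen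
  rw [Real.log_exp, Real.log_div hy.ne' hx.ne'] at this
  linarith

lemma eq_of_forall_inner_sub_log_expSum_le (ha : ∀ i ∈ s, 0 < a i) (hs : s.Nonempty)
    (hspan : ∀ (u : F) (c : ℝ), (∀ i ∈ s, ⟪z i, u⟫ = c) → u = 0) {δ t t' : F}
    (ht : ∀ y, ⟪δ, y⟫ - Real.log (expSum s a z y) ≤ ⟪δ, t⟫ - Real.log (expSum s a z t))
    (ht' : ∀ y, ⟪δ, y⟫ - Real.log (expSum s a z y) ≤ ⟪δ, t'⟫ - Real.log (expSum s a z t')) :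
    t' = t := by
  by_contra hne
  obtain ⟨i₀, hi₀⟩ := hs
  have hnonconst : ∃ i ∈ s, ∃ j ∈ s, ⟪z i, t' - t⟫ ≠ ⟪z j, t' - t⟫ := by
    by_contra! hconst
    exact hne (sub_eq_zero.1 (hspan _ _ fun i hi => hconst i hi i₀ hi₀))
  have hlt := log_expSum_add_inner_tiltedMean_lt ha hnonconst
  rw [tiltedMean_eq_of_forall_inner_sub_log_expSum_le ha ⟨i₀, hi₀⟩ ht, inner_sub_right] at hlt
  linarith [ht' t]

lemma inner_add_log_le_log_expSum (ha : ∀ i ∈ s, 0 < a i) {i : ι} (hi : i ∈ s) (x : F) :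
    ⟪z i, x⟫ + Real.log (a i) ≤ Real.log (expSum s a z x) := by
  have hterm : a i * Real.exp ⟪z i, x⟫ ≤ expSum s a z x :=
    Finset.single_le_sum (f := fun j => a j * Real.exp ⟪z j, x⟫)
      (fun j hj => (mul_pos (ha j hj) (Real.exp_pos _)).le) hi
  have := Real.log_le_log (mul_pos (ha i hi) (Real.exp_pos _)) hterm
  rwa [Real.log_mul (ha i hi).ne' (Real.exp_pos _).ne', Real.log_exp, add_comm] at this

lemma inner_le_log_expSum_add (ha : ∀ i ∈ s, 0 < a i) {C : ℝ}
    (hC : ∀ i ∈ s, -Real.log (a i) ≤ C) {w : F} (hw : w ∈ convexHull ℝ (z '' s)) (x : F) :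
    ⟪w, x⟫ ≤ Real.log (expSum s a z x) + C := by
  have hconv : Convex ℝ {w : F | ⟪w, x⟫ ≤ Real.log (expSum s a z x) + C} :=
    convex_halfSpace_le ⟨fun _ _ => inner_add_left _ _ _, fun _ _ => real_inner_smul_left _ _ _⟩ _
  refine convexHull_min ?_ hconv hw
  rintro _ ⟨i, hi, rfl⟩
  show ⟪z i, x⟫ ≤ _
  linarith [inner_add_log_le_log_expSum (z := z) ha hi x, hC i hi]

lemma nonempty_of_mem_convexHull_image {w : F} (hw : w ∈ convexHull ℝ (z '' s)) :
    s.Nonempty := by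
  simpa using convexHull_nonempty_iff.1 ⟨w, hw⟩

/-- `w = δ + (ε/2)‖x‖⁻¹ x` lies in the `ε`-ball around `δ`, also for `x = 0` (where `‖x‖⁻¹ = 0`). -/
lemma inner_sub_log_expSum_le (ha : ∀ i ∈ s, 0 < a i) {δ : F}
    (hδ : δ ∈ interior (convexHull ℝ (z '' s))) :
    ∃ ε > 0, ∃ C, ∀ x, ⟪δ, x⟫ - Real.log (expSum s a z x) ≤ C - ε * ‖x‖ := by
  have hs := nonempty_of_mem_convexHull_image (interior_subset hδ)
  obtain ⟨ε, hε, hball⟩ := Metric.mem_nhds_iff.1 (mem_interior_iff_mem_nhds.1 hδ)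
  set C := s.sup' hs fun i => -Real.log (a i)
  refine ⟨ε / 2, half_pos hε, C, fun x => ?_⟩
  set w := δ + (ε / 2 * ‖x‖⁻¹) • x
  have hw : w ∈ Metric.ball δ ε := by
    rw [Metric.mem_ball, dist_eq_norm, add_sub_cancel_left, norm_smul, Real.norm_eq_abs,
      abs_of_nonneg (by positivity), mul_assoc]
    calc ε / 2 * (‖x‖⁻¹ * ‖x‖) ≤ ε / 2 * 1 := by gcongr; exact inv_mul_le_one
      _ < ε := by linarith
  have hbound := inner_le_log_expSum_add ha (C := C)
    (fun i hi => Finset.le_sup' (fun i => -Real.log (a i)) hi) (hball hw) x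
  rw [inner_add_left, real_inner_smul_left, real_inner_self_eq_norm_sq, mul_assoc, sq,
    ← mul_assoc ‖x‖⁻¹, inv_mul_mul_self] at hbound
  linarith

lemma exists_forall_inner_sub_log_expSum_le [ProperSpace F] (ha : ∀ i ∈ s, 0 < a i) {δ : F}
    (hδ : δ ∈ interior (convexHull ℝ (z '' s))) :
    ∃ t, ∀ y, ⟪δ, y⟫ - Real.log (expSum s a z y) ≤ ⟪δ, t⟫ - Real.log (expSum s a z t) := by
  have hs := nonempty_of_mem_convexHull_image (interior_subset hδ)
  obtain ⟨ε, hε, C, hbound⟩ := inner_sub_log_expSum_le ha hδ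
  have hlinear : Filter.Tendsto (fun x : F => C - ε * ‖x‖) (Filter.cocompact F) Filter.atBot :=
    Filter.tendsto_atBot_add_const_left _ C
      (Filter.tendsto_neg_atTop_atBot.comp (tendsto_norm_cocompact_atTop.const_mul_atTop hε))
  have hcont : Continuous fun y => ⟪δ, y⟫ - Real.log (expSum s a z y) :=
    (continuous_const.inner continuous_id).sub (continuous_log_expSum ha hs)
  exact hcont.exists_forall_ge (Filter.tendsto_atBot_mono hbound hlinear)

end LogSumExp

variable {d : ℕ} {p : (Fin d → ℤ) → ℝ}

lemma pairR_eq_inner (x y : E d) : pairR x y = ⟪y, x⟫ := by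
  simp only [pairR, PiLp.inner_apply, RCLike.inner_apply, RCLike.conj_to_real]

lemma kappa_eq_expSum (hfin : (Function.support p).Finite) :
    kappa p = expSum hfin.toFinset p emb := by
  ext x
  rw [kappa, finsum_eq_finsetSum_of_support_subset _ fun v hv => hfin.mem_toFinset.2
    (Function.support_mul_subset_left _ _ hv)]
  simp only [expSum, pairR_eq_inner]

lemma emb_zero : emb (0 : Fin d → ℤ) = 0 := by
  ext i; simp [emb]

lemma emb_single (i : Fin d) : emb (Pi.single i 1) = EuclideanSpace.single i 1 := by
  ext j; by_cases h : j = i <;> simp [emb, h]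

lemma emb_sub (x y : Fin d → ℤ) : emb (x - y) = emb x - emb y := by
  ext i; simp [emb]

lemma inner_emb_eq_of_tfun_ne_zero {u : E d} {c : ℝ} (hc : ∀ v, p v ≠ 0 → ⟪emb v, u⟫ = c) :
    ∀ n x, tfun p n x ≠ 0 → ⟪emb x, u⟫ = n * c
  | 0, x, hx => by
    obtain rfl : x = 0 := by by_contra h; simp [tfun, h] at hx
    simp [emb_zero]
  | n + 1, x, hx => by
    obtain ⟨y, hy⟩ : ∃ y, tfun p n y * p (x - y) ≠ 0 := by
      by_contra! h
      exact hx (by simp only [tfun, h, finsum_zero])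
    have hstep := hc _ (right_ne_zero_of_mul hy)
    rw [emb_sub, inner_sub_left, inner_emb_eq_of_tfun_ne_zero hc n y (left_ne_zero_of_mul hy)]
      at hstep
    push_cast
    linarith

lemma Irred.eq_zero_of_inner_emb_eq (hirr : Irred p) {u : E d} {c : ℝ}
    (hc : ∀ v, p v ≠ 0 → ⟪emb v, u⟫ = c) : u = 0 := by
  have hc0 : c = 0 := by
    obtain ⟨n, hn, hpos⟩ := hirr 0
    have := inner_emb_eq_of_tfun_ne_zero hc n 0 hpos.ne'
    rw [emb_zero, inner_zero_left, eq_comm, mul_eq_zero] at this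
    exact this.resolve_left (by positivity)
  ext i
  obtain ⟨n, -, hpos⟩ := hirr (Pi.single i 1)
  have := inner_emb_eq_of_tfun_ne_zero hc n _ hpos.ne'
  simpa [emb_single, EuclideanSpace.inner_single_left, hc0] using this

theorem statement2_general (d : ℕ) (p : (Fin d → ℤ) → ℝ) (hp : ∀ v, 0 ≤ p v)
    (hfin : (Function.support p).Finite) (hirr : Irred p)
    (δ : E d) (hδ : δ ∈ Mset p) :
    ∃ s : E d,
      (∀ x : E d, pairR x δ - logKappa p x ≤ pairR s δ - logKappa p s) ∧
      (∀ s' : E d,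
        (∀ x : E d, pairR x δ - logKappa p x ≤ pairR s' δ - logKappa p s') → s' = s) ∧
      gradient (logKappa p) s = δ := by
  have ha : ∀ v ∈ hfin.toFinset, 0 < p v := fun v hv => (hp v).lt_of_ne' (hfin.mem_toFinset.1 hv)
  have hspan (u : E d) (c : ℝ) (hc : ∀ v ∈ hfin.toFinset, ⟪emb v, u⟫ = c) : u = 0 :=
    hirr.eq_zero_of_inner_emb_eq fun v hv => hc v (hfin.mem_toFinset.2 hv)
  rw [Mset, ← hfin.coe_toFinset] at hδ
  have hV := nonempty_of_mem_convexHull_image (interior_subset hδ)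
  have hlog : logKappa p = fun x => Real.log (expSum hfin.toFinset p emb x) := by
    funext x; simp only [logKappa, kappa_eq_expSum hfin]
  simp only [pairR_eq_inner, hlog]
  obtain ⟨s, hs⟩ := exists_forall_inner_sub_log_expSum_le ha hδ
  refine ⟨s, hs, fun s' hs' => eq_of_forall_inner_sub_log_expSum_le ha hV hspan hs hs', ?_⟩
  rw [(hasGradientAt_log_expSum ha hV s).gradient,
    tiltedMean_eq_of_forall_inner_sub_log_expSum_le ha hV hs]

/-- For an irreducible finitely supported random walk and `δ ∈ M`, the function
`x ↦ ⟨x,δ⟩ - log κ(x)` attains its global maximum at a unique point `s`, which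
satisfies `∇ log κ(s) = δ`. -/
theorem statement2 (d : ℕ) (p : (Fin d → ℤ) → ℝ) (hp : ∀ v, 0 ≤ p v)
    (hfin : (Function.support p).Finite) (hsum : ∑ᶠ v, p v = 1) (hirr : Irred p)
    (δ : E d) (hδ : δ ∈ Mset p) :
    ∃ s : E d,
      (∀ x : E d, pairR x δ - logKappa p x ≤ pairR s δ - logKappa p s) ∧
      (∀ s' : E d,
        (∀ x : E d, pairR x δ - logKappa p x ≤ pairR s' δ - logKappa p s') → s' = s) ∧
      gradient (logKappa p) s = δ :=
  statement2_general d p hp hfin hirr δ hδ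

end RWalk
end
end

section
/- Let p be the step distribution of an irreducible random walk on ℤ^d with finite support and period r, and for x ∈ ℤ^d let m_x denote the smallest m ∈ ℕ with p(m; x) > 0. There exists K ∈ ℕ such that for every x ∈ ℤ^d and every n ≥ Kr + m_x: p(n; x) > 0 if n ≡ m_x (mod r), and p(n; x) = 0 otherwise. -/
/- Framework for random walks on the integer lattice ℤ^d. -/

noncomputable section

namespace RWalk

/-! The times `n` with `p(n; 0) > 0` form an additive submonoid of `ℕ` (concatenate two loops),
whose gcd is the period `r`. A submonoid of `ℕ` contains every large multiple of its gcd, so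
from some `N` on every multiple of `r` is a return time; prefixing such a loop to a path of
length `m_x` to `x` gives positivity. Conversely, closing two paths to `x` of lengths `m`, `n`
by one common path from `x` back to `0` (irreducibility) shows `n ≡ m (mod r)`. -/

section Positivity

variable {d : ℕ} {p : (Fin d → ℤ) → ℝ}

theorem tfun_nonneg (hp : ∀ v, 0 ≤ p v) : ∀ n x, 0 ≤ tfun p n x
  | 0, x => by unfold tfun; positivity
  | n + 1, x => finsum_nonneg fun y => mul_nonneg (tfun_nonneg hp n y) (hp _)

theorem tfun_support_finite (hfin : (Function.support p).Finite) :
    ∀ n, (Function.support (tfun p n)).Finite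
  | 0 => (Set.finite_singleton 0).subset fun x hx => by
      simpa [tfun] using hx
  | n + 1 => by
    refine (((tfun_support_finite hfin n).prod hfin).image fun q => q.1 + q.2).subset ?_
    intro x hx
    obtain ⟨y, hy⟩ : ∃ y, tfun p n y * p (x - y) ≠ 0 := by
      by_contra! h
      exact hx (finsum_eq_zero_of_forall_eq_zero h)
    exact ⟨(y, x - y), ⟨left_ne_zero_of_mul hy, right_ne_zero_of_mul hy⟩, add_sub_cancel y x⟩

theorem exists_tfun_pos_of_tfun_succ_pos (hp : ∀ v, 0 ≤ p v) {n : ℕ} {x : Fin d → ℤ}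
    (h : 0 < tfun p (n + 1) x) : ∃ y, 0 < tfun p n y ∧ 0 < p (x - y) := by
  by_contra! hzero
  refine h.ne' (finsum_eq_zero_of_forall_eq_zero fun y => ?_)
  rcases (tfun_nonneg hp n y).eq_or_lt with hy | hy
  · rw [← hy, zero_mul]
  · exact mul_eq_zero_of_right _ ((hzero y hy).antisymm (hp _))

theorem tfun_succ_pos (hp : ∀ v, 0 ≤ p v) (hfin : (Function.support p).Finite) {n : ℕ}
    {y v : Fin d → ℤ} (hy : 0 < tfun p n y) (hv : 0 < p v) : 0 < tfun p (n + 1) (y + v) := by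
  -- `∑ᶠ` is `0` when the summand has infinite support, hence `hfin`.
  have hsupp : (Function.support fun z => tfun p n z * p (y + v - z)).Finite :=
    (tfun_support_finite hfin n).subset fun z hz => left_ne_zero_of_mul hz
  calc 0 < tfun p n y * p (y + v - y) := by rw [add_sub_cancel_left]; exact mul_pos hy hv
    _ ≤ tfun p (n + 1) (y + v) :=
      single_le_finsum y hsupp fun z => mul_nonneg (tfun_nonneg hp n z) (hp _)

theorem tfun_add_pos (hp : ∀ v, 0 ≤ p v) (hfin : (Function.support p).Finite) {a : ℕ}
    {y : Fin d → ℤ} (hy : 0 < tfun p a y) :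
    ∀ {b : ℕ} {z : Fin d → ℤ}, 0 < tfun p b z → 0 < tfun p (a + b) (y + z)
  | 0, z, hz => by
    obtain rfl : z = 0 := by by_contra h; simp [tfun, h] at hz
    simpa using hy
  | b + 1, z, hz => by
    obtain ⟨w, hw, hv⟩ := exists_tfun_pos_of_tfun_succ_pos hp hz
    have := tfun_succ_pos hp hfin (tfun_add_pos hp hfin hy hw) hv
    rwa [add_assoc y, add_sub_cancel] at this

end Positivity

section Period

variable {d : ℕ} {p : (Fin d → ℤ) → ℝ}

def returnTimes (hp : ∀ v, 0 ≤ p v) (hfin : (Function.support p).Finite) : AddSubmonoid ℕ where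
  carrier := {n | 0 < tfun p n 0}
  zero_mem' := by simp [tfun]
  add_mem' ha hb := by simpa using tfun_add_pos hp hfin ha hb

theorem setGcd_returnTimes (hp : ∀ v, 0 ≤ p v) (hfin : (Function.support p).Finite) {r : ℕ}
    (hr1 : ∀ n : ℕ, 0 < n → 0 < tfun p n 0 → r ∣ n)
    (hr2 : ∀ m : ℕ, (∀ n : ℕ, 0 < n → 0 < tfun p n 0 → m ∣ n) → m ∣ r) :
    Nat.setGcd (returnTimes hp hfin) = r := by
  refine Nat.dvd_antisymm (hr2 _ fun n _ hn => Nat.setGcd_dvd_of_mem hn) ?_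
  refine Nat.dvd_setGcd_iff.mpr fun n hn => ?_
  rcases n.eq_zero_or_pos with rfl | hpos
  · exact dvd_zero r
  · exact hr1 n hpos hn

theorem eventually_tfun_pos_of_dvd (hp : ∀ v, 0 ≤ p v) (hfin : (Function.support p).Finite)
    {r : ℕ} (hr1 : ∀ n : ℕ, 0 < n → 0 < tfun p n 0 → r ∣ n)
    (hr2 : ∀ m : ℕ, (∀ n : ℕ, 0 < n → 0 < tfun p n 0 → m ∣ n) → m ∣ r) :
    ∃ N, ∀ n ≥ N, r ∣ n → 0 < tfun p n 0 := by
  obtain ⟨N, hN⟩ := Nat.exists_mem_closure_of_ge (returnTimes hp hfin : Set ℕ)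
  rw [setGcd_returnTimes hp hfin hr1 hr2, AddSubmonoid.closure_eq] at hN
  exact ⟨N, hN⟩

theorem modEq_of_tfun_pos (hp : ∀ v, 0 ≤ p v) (hfin : (Function.support p).Finite)
    (hirr : Irred p) {r : ℕ} (hr1 : ∀ n : ℕ, 0 < n → 0 < tfun p n 0 → r ∣ n)
    {x : Fin d → ℤ} {m n : ℕ} (hm : 0 < tfun p m x) (hn : 0 < tfun p n x) : n ≡ m [MOD r] := by
  obtain ⟨l, hl, hback⟩ := hirr (-x)
  have hreturn : ∀ {k}, 0 < tfun p k x → k + l ≡ 0 [MOD r] := fun hk =>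
    Nat.modEq_zero_iff_dvd.mpr (hr1 _ (by omega) (by simpa using tfun_add_pos hp hfin hk hback))
  exact Nat.ModEq.add_right_cancel' l ((hreturn hn).trans (hreturn hm).symm)

end Period

theorem statement13_general (d : ℕ) (p : (Fin d → ℤ) → ℝ) (hp : ∀ v, 0 ≤ p v)
    (hfin : (Function.support p).Finite) (hirr : Irred p)
    (r : ℕ) (hr1 : ∀ n : ℕ, 0 < n → 0 < tfun p n 0 → r ∣ n)
    (hr2 : ∀ m : ℕ, (∀ n : ℕ, 0 < n → 0 < tfun p n 0 → m ∣ n) → m ∣ r) :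
    ∃ K : ℕ, ∀ x : Fin d → ℤ,
      ∀ m : ℕ, 0 < tfun p m x → (∀ k : ℕ, 0 < tfun p k x → m ≤ k) →
        ∀ n : ℕ, K * r + m ≤ n →
          (n % r = m % r → 0 < tfun p n x) ∧
          (¬ n % r = m % r → tfun p n x = 0) := by
  obtain ⟨N, hN⟩ := eventually_tfun_pos_of_dvd hp hfin hr1 hr2
  have hr : 0 < r := by
    obtain ⟨a, ha, hreturn⟩ := hirr 0
    exact Nat.pos_of_ne_zero fun h => ha.ne' (Nat.eq_zero_of_zero_dvd (h ▸ hr1 a ha hreturn))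
  refine ⟨N, fun x m hm _ n hn => ⟨fun hmod => ?_, fun hmod => ?_⟩⟩
  · obtain ⟨k, rfl⟩ := Nat.exists_eq_add_of_le (le_of_add_le_right hn)
    have hk : r ∣ k := by simpa using (Nat.modEq_iff_dvd' (Nat.le_add_right m k)).mp hmod.symm
    have hNk : N ≤ k := (Nat.le_mul_of_pos_right N hr).trans (by omega)
    simpa using tfun_add_pos hp hfin hm (hN k hNk hk)
  · by_contra hne
    exact hmod (modEq_of_tfun_pos hp hfin hirr hr1 hm ((tfun_nonneg hp n x).lt_of_ne' hne))

/-- There is `K ∈ ℕ` such that for all `x` and all `n ≥ Kr + m_x`: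
`p(n;x) > 0` if `n ≡ m_x (mod r)` and `p(n;x) = 0` otherwise.  Here `r` is the period,
specified by the gcd hypotheses `hr1`, `hr2`, and `m` ranges over the minimal
positive-probability times for `x`. -/
theorem statement13 (d : ℕ) (p : (Fin d → ℤ) → ℝ) (hp : ∀ v, 0 ≤ p v)
    (hfin : (Function.support p).Finite) (hsum : ∑ᶠ v, p v = 1) (hirr : Irred p)
    (r : ℕ) (hr1 : ∀ n : ℕ, 0 < n → 0 < tfun p n 0 → r ∣ n)
    (hr2 : ∀ m : ℕ, (∀ n : ℕ, 0 < n → 0 < tfun p n 0 → m ∣ n) → m ∣ r) :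
    ∃ K : ℕ, ∀ x : Fin d → ℤ,
      ∀ m : ℕ, 0 < tfun p m x → (∀ k : ℕ, 0 < tfun p k x → m ≤ k) →
        ∀ n : ℕ, K * r + m ≤ n →
          (n % r = m % r → 0 < tfun p n x) ∧
          (¬ n % r = m % r → tfun p n x = 0) :=
  statement13_general d p hp hfin hirr r hr1 hr2

end RWalk
end
end
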